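/- arXiv:2109.12604 — 3 statements merged into one kernel-verified Lean document; each statement's English description precedes it below -/
import Mathlib

section
/- Let (λ(t), x(t), v(t)) be a continuously differentiable solution on [0,∞) of the accelerated primal-dual flow: θ(t)λ'(t) = A v(t) − b, x'(t) = v(t) − x(t), γ(t)v'(t) = μ_β(x(t) − v(t)) − ∇_x L_β(x(t), λ(t)), where θ(t) = θ₀ e^{−t} and γ(t) = μ_β + (γ₀ − μ_β)e^{−t} with θ₀, γ₀ > 0. Define the Lyapunov function E(t) = L_β(x(t), λ*) − L_β(x*, λ(t)) + (γ(t)/2)‖v(t) − x*‖² + (θ(t)/2)‖λ(t) − λ*‖². Then for all t ≥ 0, d/dt E(t) ≤ −E(t) − (μ_β/2)‖x'(t)‖². -/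
/-!
Differentiate the Lyapunov function term by term, using θ' = -θ and γ' = μ_β - γ, and substitute
the equations of motion. Since ∇ₓL_β(x, λ) = ∇ₓL_β(x, λ*) + Aᵀ(λ - λ*) and θλ' = A(v - x*), the
multiplier terms cancel, and by polarization the μ_β-terms collapse to μ_β/2 (‖x - x*‖² - ‖x'‖²):
  E' = -⟪∇ₓL_β(x, λ*), x - x*⟫ + μ_β/2 ‖x - x*‖² - γ/2 ‖v - x*‖² - θ/2 ‖λ - λ*‖² - μ_β/2 ‖x'‖².
As A x* = b, strong convexity of f together with ‖A z‖ ≥ σ_min(A) ‖z‖ makes f_β strongly convex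
with modulus μ_β around x*, i.e. L_β(x, λ*) - L_β(x*, λ) + μ_β/2 ‖x - x*‖² ≤ ⟪∇ₓL_β(x, λ*), x - x*⟫,
and the claim follows.
-/

open scoped RealInnerProductSpace

/-- The smallest singular value of a linear map between Euclidean spaces. -/
noncomputable def sigmaMin {n m : ℕ}
    (A : EuclideanSpace ℝ (Fin n) →L[ℝ] EuclideanSpace ℝ (Fin m)) : ℝ :=
  sInf {c : ℝ | ∃ x : EuclideanSpace ℝ (Fin n), ‖x‖ = 1 ∧ ‖A x‖ = c}

section SigmaMin

variable {n m : ℕ} (A : EuclideanSpace ℝ (Fin n) →L[ℝ] EuclideanSpace ℝ (Fin m))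

lemma sigmaMin_nonneg : 0 ≤ sigmaMin A :=
  Real.sInf_nonneg fun _ ⟨_, _, hc⟩ => hc ▸ norm_nonneg _

lemma sigmaMin_mul_norm_le (z : EuclideanSpace ℝ (Fin n)) : sigmaMin A * ‖z‖ ≤ ‖A z‖ := by
  rcases eq_or_ne z 0 with rfl | hz
  · simp
  have hz' : 0 < ‖z‖ := norm_pos_iff.mpr hz
  have hunit : sigmaMin A ≤ ‖A (‖z‖⁻¹ • z)‖ :=
    csInf_le ⟨0, fun _ ⟨_, _, hc⟩ => hc ▸ norm_nonneg _⟩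
      ⟨‖z‖⁻¹ • z, by rw [norm_smul, norm_inv, norm_norm, inv_mul_cancel₀ hz'.ne'], rfl⟩
  rw [map_smul, norm_smul, norm_inv, norm_norm] at hunit
  rwa [← le_div_iff₀ hz', div_eq_inv_mul]

lemma sigmaMin_sq_mul_norm_sq_le (z : EuclideanSpace ℝ (Fin n)) :
    sigmaMin A ^ 2 * ‖z‖ ^ 2 ≤ ‖A z‖ ^ 2 := by
  rw [← mul_pow]
  exact pow_le_pow_left₀ (mul_nonneg (sigmaMin_nonneg A) (norm_nonneg z))
    (sigmaMin_mul_norm_le A z) 2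

end SigmaMin

section Calculus

variable {E : Type*} [NormedAddCommGroup E] [InnerProductSpace ℝ E]

theorem HasDerivAt.half_mul_norm_sub_sq {c : ℝ → ℝ} {c' t : ℝ} {u : ℝ → E} {u' : E}
    (hc : HasDerivAt c c' t) (hu : HasDerivAt u u' t) (p : E) :
    HasDerivAt (fun s => c s / 2 * ‖u s - p‖ ^ 2)
      (c' / 2 * ‖u t - p‖ ^ 2 + c t * ⟪u t - p, u'⟫) t :=
  ((hc.div_const 2).mul (hu.sub_const p).norm_sq).congr_deriv (by ring)

lemma hasDerivAt_of_eq_add_mul_exp_neg {φ : ℝ → ℝ} {a c : ℝ}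
    (h : ∀ s, φ s = a + c * Real.exp (-s)) (t : ℝ) : HasDerivAt φ (a - φ t) t := by
  rw [h t, funext h]
  exact (((hasDerivAt_neg t).exp.const_mul c).const_add a).congr_deriv (by ring)

end Calculus

section AugmentedLagrangian

variable {E F : Type*} [NormedAddCommGroup E] [InnerProductSpace ℝ E]
  [NormedAddCommGroup F] [InnerProductSpace ℝ F]

noncomputable def augLagrangian (f : E → ℝ) (A : E →L[ℝ] F) (b : F) (β : ℝ) (z : E) (w : F) : ℝ :=
  f z + β / 2 * ‖A z - b‖ ^ 2 + ⟪w, A z - b⟫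

lemma augLagrangian_of_apply_eq {f : E → ℝ} {A : E →L[ℝ] F} {b : F} {z : E} (hz : A z = b)
    (β : ℝ) (w : F) : augLagrangian f A b β z w = f z := by
  simp [augLagrangian, hz]

variable [CompleteSpace E] [CompleteSpace F]

noncomputable def augLagrangianGrad (gradf : E → E) (A : E →L[ℝ] F) (b : F) (β : ℝ) (z : E)
    (w : F) : E :=
  gradf z + β • ContinuousLinearMap.adjoint A (A z - b) + ContinuousLinearMap.adjoint A w

theorem HasDerivAt.augLagrangian_comp {f : E → ℝ} {gradf : E → E} {x : ℝ → E} {x' : E} {t : ℝ}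
    (hf : HasGradientAt f (gradf (x t)) (x t)) (hx : HasDerivAt x x' t)
    (A : E →L[ℝ] F) (b : F) (β : ℝ) (w : F) :
    HasDerivAt (fun s => augLagrangian f A b β (x s) w)
      ⟪augLagrangianGrad gradf A b β (x t) w, x'⟫ t := by
  have hfx : HasDerivAt (fun s => f (x s)) ⟪gradf (x t), x'⟫ t :=
    hf.hasFDerivAt.comp_hasDerivAt t hx
  have hres : HasDerivAt (fun s => A (x s) - b) (A x') t :=
    (A.hasFDerivAt.comp_hasDerivAt t hx).sub_const b
  refine ((hfx.add (hres.norm_sq.const_mul (β / 2))).add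
    ((hasDerivAt_const t w).inner ℝ hres)).congr_deriv ?_
  simp only [augLagrangianGrad, inner_add_left, real_inner_smul_left,
    ContinuousLinearMap.adjoint_inner_left, inner_zero_left, add_zero]
  ring

lemma augLagrangian_sub_add_le_inner_grad {f : E → ℝ} {gradf : E → E} {A : E →L[ℝ] F} {b : F}
    {μ β κ : ℝ} {z zs : E} (w : F)
    (hconv : f z + ⟪gradf z, zs - z⟫ + μ / 2 * ‖zs - z‖ ^ 2 ≤ f zs) (hβ : 0 ≤ β)
    (hA : κ * ‖z - zs‖ ^ 2 ≤ ‖A (z - zs)‖ ^ 2) (hzs : A zs = b) :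
    augLagrangian f A b β z w - f zs + (μ + β * κ) / 2 * ‖z - zs‖ ^ 2 ≤
      ⟪augLagrangianGrad gradf A b β z w, z - zs⟫ := by
  have hres : A z - b = A (z - zs) := by rw [map_sub, hzs]
  rw [← neg_sub z zs, inner_neg_right, norm_neg] at hconv
  have hgrad : ⟪augLagrangianGrad gradf A b β z w, z - zs⟫ =
      ⟪gradf z, z - zs⟫ + β * ‖A (z - zs)‖ ^ 2 + ⟪w, A (z - zs)⟫ := by
    simp only [augLagrangianGrad, inner_add_left, real_inner_smul_left,
      ContinuousLinearMap.adjoint_inner_left, hres, real_inner_self_eq_norm_sq]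
  rw [hgrad, augLagrangian, hres]
  nlinarith [mul_le_mul_of_nonneg_left hA hβ]

lemma augLagrangianGrad_eq_add_adjoint (gradf : E → E) (A : E →L[ℝ] F) (b : F) (β : ℝ) (z : E)
    (w ws : F) :
    augLagrangianGrad gradf A b β z w =
      augLagrangianGrad gradf A b β z ws + ContinuousLinearMap.adjoint A (w - ws) := by
  simp only [augLagrangianGrad, map_sub]
  abel

lemma lyapunov_deriv_eq {gradf : E → E} {A : E →L[ℝ] F} {b : F} {β μβ γ θ : ℝ}
    {x v x' v' xs : E} {lam lam' : F} (ls : F)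
    (hlam : θ • lam' = A v - b) (hx : x' = v - x)
    (hv : γ • v' = μβ • (x - v) - augLagrangianGrad gradf A b β x lam) (hxs : A xs = b) :
    ⟪augLagrangianGrad gradf A b β x ls, x'⟫
        + ((μβ - γ) / 2 * ‖v - xs‖ ^ 2 + γ * ⟪v - xs, v'⟫)
        + (-θ / 2 * ‖lam - ls‖ ^ 2 + θ * ⟪lam - ls, lam'⟫) =
      -⟪augLagrangianGrad gradf A b β x ls, x - xs⟫ + μβ / 2 * ‖x - xs‖ ^ 2
        - γ / 2 * ‖v - xs‖ ^ 2 - θ / 2 * ‖lam - ls‖ ^ 2 - μβ / 2 * ‖x'‖ ^ 2 := by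
  have hθ : θ * ⟪lam - ls, lam'⟫ = ⟪ContinuousLinearMap.adjoint A (lam - ls), v - xs⟫ := by
    rw [← real_inner_smul_right, hlam, ← hxs, ← map_sub, ContinuousLinearMap.adjoint_inner_left]
  have hγ : γ * ⟪v - xs, v'⟫ = μβ * ⟪v - xs, x - v⟫ -
      ⟪v - xs, augLagrangianGrad gradf A b β x ls⟫ -
      ⟪v - xs, ContinuousLinearMap.adjoint A (lam - ls)⟫ := by
    rw [← real_inner_smul_right, hv, augLagrangianGrad_eq_add_adjoint _ _ _ _ _ lam ls,
      inner_sub_right, inner_add_right, real_inner_smul_right]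
    ring
  rw [hθ, hγ, hx, show v - x = (v - xs) - (x - xs) by abel,
    show x - v = (x - xs) - (v - xs) by abel]
  generalize v - xs = a, x - xs = c, lam - ls = l
  simp only [inner_sub_right, norm_sub_sq_real, real_inner_comm a, real_inner_self_eq_norm_sq]
  ring

end AugmentedLagrangian

theorem apd_flow_lyapunov_derivative_general {n m : ℕ}
    (f : EuclideanSpace ℝ (Fin n) → ℝ)
    (gradf : EuclideanSpace ℝ (Fin n) → EuclideanSpace ℝ (Fin n))
    (A : EuclideanSpace ℝ (Fin n) →L[ℝ] EuclideanSpace ℝ (Fin m))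
    (b : EuclideanSpace ℝ (Fin m))
    (μ L β θ₀ γ₀ μβ : ℝ)
    (hβ : 0 ≤ β)
    (hμβ : μβ = μ + β * sigmaMin A ^ 2)
    (hgrad : ∀ x, HasGradientAt f (gradf x) x)
    (hconv : ∀ x y, f x + ⟪gradf x, y - x⟫ + μ / 2 * ‖y - x‖ ^ 2 ≤ f y)
    (xs : EuclideanSpace ℝ (Fin n)) (ls : EuclideanSpace ℝ (Fin m))
    (hKKT1 : A xs = b)
    (lam : ℝ → EuclideanSpace ℝ (Fin m))
    (x v : ℝ → EuclideanSpace ℝ (Fin n))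
    (lam' : ℝ → EuclideanSpace ℝ (Fin m))
    (x' v' : ℝ → EuclideanSpace ℝ (Fin n))
    (hlamd : ∀ t, 0 ≤ t → HasDerivAt lam (lam' t) t)
    (hxd : ∀ t, 0 ≤ t → HasDerivAt x (x' t) t)
    (hvd : ∀ t, 0 ≤ t → HasDerivAt v (v' t) t)
    (θ γ : ℝ → ℝ)
    (hθ : ∀ t, θ t = θ₀ * Real.exp (-t))
    (hγ : ∀ t, γ t = μβ + (γ₀ - μβ) * Real.exp (-t))
    (hode1 : ∀ t, 0 ≤ t → θ t • lam' t = A (v t) - b)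
    (hode2 : ∀ t, 0 ≤ t → x' t = v t - x t)
    (hode3 : ∀ t, 0 ≤ t → γ t • v' t =
      μβ • (x t - v t) -
        (gradf (x t) + β • (ContinuousLinearMap.adjoint A) (A (x t) - b)
          + (ContinuousLinearMap.adjoint A) (lam t)))
    (Lβ : EuclideanSpace ℝ (Fin n) → EuclideanSpace ℝ (Fin m) → ℝ)
    (hLβ : ∀ z w, Lβ z w = f z + β / 2 * ‖A z - b‖ ^ 2 + ⟪w, A z - b⟫)
    (Efun : ℝ → ℝ)
    (hE : ∀ t, Efun t = Lβ (x t) ls - Lβ xs (lam t)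
      + γ t / 2 * ‖v t - xs‖ ^ 2 + θ t / 2 * ‖lam t - ls‖ ^ 2) :
    ∀ t, 0 ≤ t → ∀ d, HasDerivAt Efun d t →
      d ≤ -Efun t - μβ / 2 * ‖x' t‖ ^ 2 := by
  intro t ht d hd
  have hLβ' : Lβ = augLagrangian f A b β := funext fun z => funext (hLβ z)
  have hEfun : Efun = fun s => augLagrangian f A b β (x s) ls - f xs
      + γ s / 2 * ‖v s - xs‖ ^ 2 + θ s / 2 * ‖lam s - ls‖ ^ 2 := by
    funext s
    rw [hE, hLβ', augLagrangian_of_apply_eq hKKT1]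
  have hθd : HasDerivAt θ (0 - θ t) t :=
    hasDerivAt_of_eq_add_mul_exp_neg (fun s => by rw [hθ, zero_add]) t
  have hγd : HasDerivAt γ (μβ - γ t) t := hasDerivAt_of_eq_add_mul_exp_neg hγ t
  have hEd := ((((hxd t ht).augLagrangian_comp (hgrad _) A b β ls).sub_const (f xs)).add
    (hγd.half_mul_norm_sub_sq (hvd t ht) xs)).add (hθd.half_mul_norm_sub_sq (hlamd t ht) ls)
  have hEd_eq := lyapunov_deriv_eq ls (hode1 t ht) (hode2 t ht) (hode3 t ht) hKKT1
  have hconvex := augLagrangian_sub_add_le_inner_grad ls (hconv (x t) xs) hβ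
    (sigmaMin_sq_mul_norm_sq_le A _) hKKT1
  rw [← hμβ] at hconvex
  subst hEfun
  rw [hd.unique hEd]
  linear_combination hEd_eq + hconvex

/-- Lemma 2.1 (i): exponential decay inequality for the Lyapunov function of the
accelerated primal-dual flow. -/
theorem apd_flow_lyapunov_derivative {n m : ℕ}
    (f : EuclideanSpace ℝ (Fin n) → ℝ)
    (gradf : EuclideanSpace ℝ (Fin n) → EuclideanSpace ℝ (Fin n))
    (A : EuclideanSpace ℝ (Fin n) →L[ℝ] EuclideanSpace ℝ (Fin m))
    (b : EuclideanSpace ℝ (Fin m))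
    (μ L β θ₀ γ₀ μβ : ℝ)
    (hμ : 0 ≤ μ) (hμL : μ ≤ L) (hβ : 0 ≤ β) (hθ₀ : 0 < θ₀) (hγ₀ : 0 < γ₀)
    (hμβ : μβ = μ + β * sigmaMin A ^ 2)
    (hgrad : ∀ x, HasGradientAt f (gradf x) x)
    (hconv : ∀ x y, f x + ⟪gradf x, y - x⟫ + μ / 2 * ‖y - x‖ ^ 2 ≤ f y)
    (hlip : ∀ x y, ⟪gradf x - gradf y, x - y⟫ ≤ L * ‖x - y‖ ^ 2)
    (xs : EuclideanSpace ℝ (Fin n)) (ls : EuclideanSpace ℝ (Fin m))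
    (hKKT1 : A xs = b)
    (hKKT2 : gradf xs + (ContinuousLinearMap.adjoint A) ls = 0)
    (lam : ℝ → EuclideanSpace ℝ (Fin m))
    (x v : ℝ → EuclideanSpace ℝ (Fin n))
    (lam' : ℝ → EuclideanSpace ℝ (Fin m))
    (x' v' : ℝ → EuclideanSpace ℝ (Fin n))
    (hlamd : ∀ t, 0 ≤ t → HasDerivAt lam (lam' t) t)
    (hxd : ∀ t, 0 ≤ t → HasDerivAt x (x' t) t)
    (hvd : ∀ t, 0 ≤ t → HasDerivAt v (v' t) t)
    (hlamc : Continuous lam') (hxc : Continuous x') (hvc : Continuous v')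
    (θ γ : ℝ → ℝ)
    (hθ : ∀ t, θ t = θ₀ * Real.exp (-t))
    (hγ : ∀ t, γ t = μβ + (γ₀ - μβ) * Real.exp (-t))
    (hode1 : ∀ t, 0 ≤ t → θ t • lam' t = A (v t) - b)
    (hode2 : ∀ t, 0 ≤ t → x' t = v t - x t)
    (hode3 : ∀ t, 0 ≤ t → γ t • v' t =
      μβ • (x t - v t) -
        (gradf (x t) + β • (ContinuousLinearMap.adjoint A) (A (x t) - b)
          + (ContinuousLinearMap.adjoint A) (lam t)))
    (Lβ : EuclideanSpace ℝ (Fin n) → EuclideanSpace ℝ (Fin m) → ℝ)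
    (hLβ : ∀ z w, Lβ z w = f z + β / 2 * ‖A z - b‖ ^ 2 + ⟪w, A z - b⟫)
    (Efun : ℝ → ℝ)
    (hE : ∀ t, Efun t = Lβ (x t) ls - Lβ xs (lam t)
      + γ t / 2 * ‖v t - xs‖ ^ 2 + θ t / 2 * ‖lam t - ls‖ ^ 2) :
    ∀ t, 0 ≤ t → ∀ d, HasDerivAt Efun d t →
      d ≤ -Efun t - μβ / 2 * ‖x' t‖ ^ 2 :=
  apd_flow_lyapunov_derivative_general f gradf A b μ L β θ₀ γ₀ μβ hβ hμβ hgrad hconv xs ls hKKT1 lam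
    x v lam' x' v' hlamd hxd hvd θ γ hθ hγ hode1 hode2 hode3 Lβ hLβ Efun hE
end

section
/- Suppose the sequences (λ_k), (x_k), (v_k), (θ_k), (α_k) satisfy, for all k ∈ ℕ, the dual update λ_{k+1} = λ_k + (α_k/θ_k)(A v_{k+1} − b), the primal update (x_{k+1} − x_k)/α_k = v_{k+1} − x_{k+1}, and θ_{k+1} = θ_k/(1+α_k) with α_k > 0 and θ₀ = 1. Then the quantity λ_k − θ_k^{−1}(Ax_k − b) is invariant: λ_k − θ_k^{−1}(Ax_k − b) = λ₀ − (Ax₀ − b) for all k ∈ ℕ; consequently ‖Ax_k − b‖ = θ_k‖λ_k − λ₀ + (Ax₀ − b)‖. -/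
/-!
Writing `r_k = A x_k - b`, the primal update says `(1 + α_k) x_{k+1} = x_k + α_k v_{k+1}`, so
`α_k (A v_{k+1} - b) = (1 + α_k) r_{k+1} - r_k`. Since `θ_{k+1}⁻¹ = (1 + α_k) / θ_k`, the dual
increment `λ_{k+1} - λ_k` equals `θ_{k+1}⁻¹ r_{k+1} - θ_k⁻¹ r_k`, and the sum telescopes.
-/

section PrimalDualStep

variable {𝕜 E F : Type*} [Field 𝕜] [AddCommGroup E] [Module 𝕜 E] [AddCommGroup F] [Module 𝕜 F]

theorem smul_eq_one_add_smul_sub_of_inv_smul_sub {α : 𝕜} (hα : α ≠ 0) {x x' v : E}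
    (hprim : α⁻¹ • (x' - x) = v - x') : α • v = (1 + α) • x' - x := by
  have h := congrArg (α • ·) hprim
  simp only [smul_inv_smul₀ hα, smul_sub] at h
  rw [add_smul, one_smul]
  linear_combination (norm := module) -h

theorem dual_increment_eq {M : Type*} [FunLike M E F] [LinearMapClass M 𝕜 E F] (A : M) (b : F)
    {α θ : 𝕜} (hα : α ≠ 0) {x x' v : E} (hprim : α⁻¹ • (x' - x) = v - x') :
    (α / θ) • (A v - b) = (θ / (1 + α))⁻¹ • (A x' - b) - θ⁻¹ • (A x - b) := by
  have hres : α • (A v - b) = (1 + α) • (A x' - b) - (A x - b) := by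
    rw [smul_sub, ← map_smul, smul_eq_one_add_smul_sub_of_inv_smul_sub hα hprim,
      map_sub, map_smul]
    module
  calc (α / θ) • (A v - b) = θ⁻¹ • (α • (A v - b)) := by rw [smul_smul, div_eq_inv_mul]
    _ = θ⁻¹ • ((1 + α) • (A x' - b) - (A x - b)) := by rw [hres]
    _ = (θ / (1 + α))⁻¹ • (A x' - b) - θ⁻¹ • (A x - b) := by
      rw [inv_div, smul_sub, smul_smul, div_eq_inv_mul]

end PrimalDualStep

theorem pos_of_succ_eq_div_one_add {θ α : ℕ → ℝ} (hα : ∀ k, 0 ≤ α k) (hθ0 : 0 < θ 0)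
    (hθ : ∀ k, θ (k + 1) = θ k / (1 + α k)) : ∀ k, 0 < θ k
  | 0 => hθ0
  | k + 1 => by
    rw [hθ]
    have := hα k
    have := pos_of_succ_eq_div_one_add hα hθ0 hθ k
    positivity

theorem norm_eq_mul_norm_of_eq_inv_smul {E : Type*} [SeminormedAddCommGroup E]
    [NormedSpace ℝ E] {θ : ℝ} (hθ : 0 < θ) {r w : E} (hw : w = θ⁻¹ • r) : ‖r‖ = θ * ‖w‖ := by
  rw [hw, norm_smul, Real.norm_eq_abs, abs_inv, abs_of_pos hθ, mul_inv_cancel_left₀ hθ.ne']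

/-- Invariance of `λ_k − θ_k⁻¹(Ax_k − b)` along the primal-dual updates
(equations (3.18)–(3.19) of the paper). -/
theorem dual_feasibility_invariant {n m : ℕ}
    (A : EuclideanSpace ℝ (Fin n) →L[ℝ] EuclideanSpace ℝ (Fin m))
    (b : EuclideanSpace ℝ (Fin m))
    (lam : ℕ → EuclideanSpace ℝ (Fin m))
    (x v : ℕ → EuclideanSpace ℝ (Fin n))
    (θ α : ℕ → ℝ)
    (hα : ∀ k, 0 < α k) (hθ0 : θ 0 = 1)
    (hθ : ∀ k, θ (k + 1) = θ k / (1 + α k))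
    (hlam : ∀ k, lam (k + 1) = lam k + (α k / θ k) • (A (v (k + 1)) - b))
    (hprim : ∀ k, (α k)⁻¹ • (x (k + 1) - x k) = v (k + 1) - x (k + 1)) :
    ∀ k, lam k - (θ k)⁻¹ • (A (x k) - b) = lam 0 - (A (x 0) - b) ∧
      ‖A (x k) - b‖ = θ k * ‖lam k - lam 0 + (A (x 0) - b)‖ := by
  have hθpos := pos_of_succ_eq_div_one_add (fun k ↦ (hα k).le) (hθ0 ▸ one_pos) hθ
  have hinv : ∀ k, lam k - (θ k)⁻¹ • (A (x k) - b) = lam 0 - (A (x 0) - b) := by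
    intro k
    induction k with
    | zero => simp [hθ0]
    | succ k ih =>
      rw [← ih, hlam, hθ, dual_increment_eq A b (hα k).ne' (hprim k)]
      abel
  refine fun k ↦ ⟨hinv k, norm_eq_mul_norm_of_eq_inv_smul (hθpos k) ?_⟩
  rw [← sub_sub_cancel (lam k) ((θ k)⁻¹ • (A (x k) - b)), hinv k]
  abel
end

section
/- Let μ_β ≥ 0, ‖A‖ > 0, θ₀ = 1, γ₀ > 0, and let the sequences satisfy θ_{k+1} = θ_k/(1+α_k), γ_{k+1} = (γ_k + μ_β α_k)/(1+α_k), with α_k = √(θ_k γ_k)/‖A‖. Set γ_min = min{μ_β, γ₀}, γ_max = max{μ_β, γ₀}, and Q = 3‖A‖ + √γ_max. Then for all k ∈ ℕ, θ_k ≤ min{ Q/(√γ₀ · k + Q), Q²/(√γ_min · k + Q)² }. -/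
/-!
Both bounds come from one telescoping argument. If `x (k+1) = x k / r k` with `x 0 ≤ 1` and
`x k * c ≤ Q * (r k - 1)`, then `x k * (c k + Q) ≤ Q`. For the first bound take
`x = θ`, `r = 1 + α`, `c = √γ₀`: since `γ_k / θ_k` never decreases, `γ₀ θ_k ≤ γ_k`, hence
`θ_k √γ₀ ≤ √(θ_k γ_k) = α_k ‖A‖ ≤ Q α_k`. For the second take `x = √θ`, `r = √(1 + α)`,
`c = √γ_min`: here `γ_k` stays between `μ_β` and `γ₀`, so `√θ_k √γ_min ≤ α_k ‖A‖`, and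
`α_k ‖A‖ ≤ Q (√(1 + α_k) - 1)` because `(√(1 + α_k) + 1) ‖A‖ ≤ α_k ‖A‖ + 2 ‖A‖ ≤ √γ_max + 2 ‖A‖ ≤ Q`.
-/

open Set

lemma div_one_add_mem_uIcc {x μ a : ℝ} (ha : 0 ≤ a) : (x + μ * a) / (1 + a) ∈ uIcc x μ := by
  have h : 0 < 1 + a := by linarith
  rcases le_total x μ with hxμ | hμx
  · rw [uIcc_of_le hxμ, mem_Icc, le_div_iff₀ h, div_le_iff₀ h]
    constructor <;> nlinarith
  · rw [uIcc_of_ge hμx, mem_Icc, le_div_iff₀ h, div_le_iff₀ h]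
    constructor <;> nlinarith

lemma mul_le_sqrt_one_add_sub_one {a A Q : ℝ} (ha : 0 ≤ a) (hA : 0 ≤ A)
    (hQ : a * A + 2 * A ≤ Q) : a * A ≤ Q * (√(1 + a) - 1) := by
  set s := √(1 + a)
  have hs_sq : s ^ 2 = 1 + a := Real.sq_sqrt (by linarith)
  have hs_one : 1 ≤ s := Real.one_le_sqrt.mpr (by linarith)
  have hs_le : (s + 1) * A ≤ Q := by nlinarith [show s ≤ 1 + a by nlinarith]
  calc a * A = (s - 1) * ((s + 1) * A) := by linear_combination (-A) * hs_sq
    _ ≤ (s - 1) * Q := mul_le_mul_of_nonneg_left hs_le (by linarith)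
    _ = Q * (s - 1) := mul_comm _ _

lemma mul_sqrt_le_sqrt_mul {t g₀ g : ℝ} (ht : 0 ≤ t) (h : g₀ * t ≤ g) : t * √g₀ ≤ √(t * g) := by
  calc t * √g₀ = √(t ^ 2 * g₀) := by rw [Real.sqrt_mul (by positivity), Real.sqrt_sq ht]
    _ ≤ √(t * g) := Real.sqrt_le_sqrt (by nlinarith)

lemma sqrt_mul_sqrt_le_mul_sqrt_one_add_sub_one {t g gmin gmax a A Q : ℝ} (ht : t ∈ Icc 0 1)
    (hg : g ∈ Icc gmin gmax) (hgmax : 0 ≤ gmax) (ha : 0 ≤ a) (hA : 0 ≤ A)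
    (haA : a * A = √(t * g)) (hQ : 2 * A + √gmax ≤ Q) : √t * √gmin ≤ Q * (√(1 + a) - 1) := by
  have hsqrt : √(t * g) ≤ √gmax := Real.sqrt_le_sqrt <|
    (mul_le_mul_of_nonneg_left hg.2 ht.1).trans (mul_le_of_le_one_left hgmax ht.2)
  calc √t * √gmin = √(t * gmin) := (Real.sqrt_mul ht.1 _).symm
    _ ≤ a * A := haA ▸ Real.sqrt_le_sqrt (mul_le_mul_of_nonneg_left hg.1 ht.1)
    _ ≤ Q * (√(1 + a) - 1) := mul_le_sqrt_one_add_sub_one ha hA (by linarith)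

lemma mul_linear_le_of_step {x r : ℕ → ℝ} {c Q : ℝ} (hQ : 0 ≤ Q) (hx0 : x 0 ≤ 1)
    (hr : ∀ k, 0 < r k) (hx : ∀ k, x (k + 1) = x k / r k) (hc : ∀ k, x k * c ≤ Q * (r k - 1))
    (k : ℕ) : x k * (c * k + Q) ≤ Q := by
  induction k with
  | zero => simpa using mul_le_of_le_one_left hQ hx0
  | succ k ih =>
    rw [hx, div_mul_eq_mul_div, div_le_iff₀ (hr k)]
    push_cast
    linear_combination ih + hc k

section Scheme

variable {μ : ℝ} {θ γ α : ℕ → ℝ}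

lemma pos_of_step (hθ0 : 0 < θ 0) (hα : ∀ k, 0 ≤ α k) (hθ : ∀ k, θ (k + 1) = θ k / (1 + α k))
    (k : ℕ) : 0 < θ k := by
  induction k with
  | zero => exact hθ0
  | succ k ih => rw [hθ]; exact div_pos ih (by linarith [hα k])

lemma le_first_of_step (hθ0 : 0 < θ 0) (hα : ∀ k, 0 ≤ α k)
    (hθ : ∀ k, θ (k + 1) = θ k / (1 + α k)) (k : ℕ) : θ k ≤ θ 0 :=
  antitone_nat_of_succ_le (fun k => by
    rw [hθ]; exact div_le_self (pos_of_step hθ0 hα hθ k).le (by linarith [hα k])) k.zero_le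

lemma mem_uIcc_of_step (hα : ∀ k, 0 ≤ α k)
    (hγ : ∀ k, γ (k + 1) = (γ k + μ * α k) / (1 + α k)) (k : ℕ) : γ k ∈ uIcc μ (γ 0) := by
  induction k with
  | zero => exact right_mem_uIcc
  | succ k ih => rw [hγ]; exact uIcc_subset_uIcc ih left_mem_uIcc (div_one_add_mem_uIcc (hα k))

lemma mul_le_mul_of_step (hμ : 0 ≤ μ) (hθ0 : 0 ≤ θ 0) (hα : ∀ k, 0 ≤ α k)
    (hθ : ∀ k, θ (k + 1) = θ k / (1 + α k))
    (hγ : ∀ k, γ (k + 1) = (γ k + μ * α k) / (1 + α k)) (k : ℕ) :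
    γ 0 * θ k ≤ θ 0 * γ k := by
  induction k with
  | zero => rw [mul_comm]
  | succ k ih =>
    rw [hθ, hγ, mul_div_assoc', mul_div_assoc']
    exact div_le_div_of_nonneg_right (by nlinarith [mul_nonneg hθ0 (mul_nonneg hμ (hα k))])
      (by linarith [hα k])

end Scheme

theorem semi_implicit_theta_decay_general
    (normA μβ γmin γmax Q : ℝ) (θ γ α : ℕ → ℝ)
    (hnormA : 0 < normA) (hμβ : 0 ≤ μβ)
    (hθ0 : θ 0 = 1)
    (hγmin : γmin = min μβ (γ 0)) (hγmax : γmax = max μβ (γ 0))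
    (hQ : Q = 3 * normA + Real.sqrt γmax)
    (hα : ∀ k, α k = Real.sqrt (θ k * γ k) / normA)
    (hθ : ∀ k, θ (k + 1) = θ k / (1 + α k))
    (hγ : ∀ k, γ (k + 1) = (γ k + μβ * α k) / (1 + α k)) :
    ∀ k : ℕ, θ k ≤ min (Q / (Real.sqrt (γ 0) * k + Q))
      (Q ^ 2 / (Real.sqrt γmin * k + Q) ^ 2) := by
  have hα0 k : 0 ≤ α k := by rw [hα]; positivity
  have hαA k : α k * normA = √(θ k * γ k) := by rw [hα]; field_simp
  have hθ0' : 0 < θ 0 := hθ0 ▸ one_pos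
  have hθpos := pos_of_step hθ0' hα0 hθ
  have hθle k : θ k ≤ 1 := hθ0 ▸ le_first_of_step hθ0' hα0 hθ k
  have hγmem k : γ k ∈ Icc γmin γmax := hγmin ▸ hγmax ▸ mem_uIcc_of_step hα0 hγ k
  have hγθ k : γ 0 * θ k ≤ γ k := by
    simpa [hθ0] using mul_le_mul_of_step hμβ hθ0'.le hα0 hθ hγ k
  have hγmax0 : 0 ≤ γmax := hγmax ▸ hμβ.trans (le_max_left _ _)
  have hQpos : 0 < Q := by rw [hQ]; positivity
  have hdecay₁ := mul_linear_le_of_step hQpos.le hθ0.le (fun k => by linarith [hα0 k]) hθ fun k =>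
    calc θ k * √(γ 0) ≤ α k * normA := hαA k ▸ mul_sqrt_le_sqrt_mul (hθpos k).le (hγθ k)
      _ ≤ Q * (1 + α k - 1) := by nlinarith [hα0 k, Real.sqrt_nonneg γmax]
  have hdecay₂ := mul_linear_le_of_step (x := fun k => √(θ k)) hQpos.le (by simp [hθ0])
    (fun k => Real.sqrt_pos.mpr (by linarith [hα0 k]))
    (fun k => by simp only [hθ, Real.sqrt_div (hθpos k).le]) fun k =>
    sqrt_mul_sqrt_le_mul_sqrt_one_add_sub_one ⟨(hθpos k).le, hθle k⟩ (hγmem k) hγmax0 (hα0 k)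
      hnormA.le (hαA k) (by rw [hQ]; linarith)
  intro k
  have hd₁ : 0 < √(γ 0) * k + Q := by positivity
  refine le_min ((le_div_iff₀ hd₁).mpr (hdecay₁ k)) ((le_div_iff₀ (by positivity)).mpr ?_)
  calc θ k * (√γmin * k + Q) ^ 2 = (√(θ k) * (√γmin * k + Q)) ^ 2 := by
        rw [mul_pow, Real.sq_sqrt (hθpos k).le]
    _ ≤ Q ^ 2 := pow_le_pow_left₀ (by positivity) (hdecay₂ k) 2

/-- Decay estimate (4.5) of Theorem 4.1: for the parameter sequences of the semi-implicit
scheme with `α_k = √(θ_k γ_k)/‖A‖`, one has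
`θ_k ≤ min{Q/(√γ₀ k + Q), Q²/(√γ_min k + Q)²}` with `Q = 3‖A‖ + √γ_max`. -/
theorem semi_implicit_theta_decay
    (normA μβ γmin γmax Q : ℝ) (θ γ α : ℕ → ℝ)
    (hnormA : 0 < normA) (hμβ : 0 ≤ μβ)
    (hθ0 : θ 0 = 1) (hγ0 : 0 < γ 0)
    (hγmin : γmin = min μβ (γ 0)) (hγmax : γmax = max μβ (γ 0))
    (hQ : Q = 3 * normA + Real.sqrt γmax)
    (hα : ∀ k, α k = Real.sqrt (θ k * γ k) / normA)
    (hθ : ∀ k, θ (k + 1) = θ k / (1 + α k))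
    (hγ : ∀ k, γ (k + 1) = (γ k + μβ * α k) / (1 + α k)) :
    ∀ k : ℕ, θ k ≤ min (Q / (Real.sqrt (γ 0) * k + Q))
      (Q ^ 2 / (Real.sqrt γmin * k + Q) ^ 2) :=
  semi_implicit_theta_decay_general normA μβ γmin γmax Q θ γ α hnormA hμβ hθ0 hγmin hγmax hQ hα hθ
    hγ
end
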